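/- arXiv:2408.15920 — 5 statements merged into one kernel-verified Lean document; each statement's English description precedes it below -/
import Mathlib

section
/- Let (Ω, F) be a measurable space, let Q be a probability measure on (Ω, F), let Z : Ω → [0, ∞) be F-measurable with ∫ Z dQ = 1, and let P be the measure with density Z with respect to Q. Let G ⊆ F be a sub-σ-algebra and let ψ : Ω → ℝ be bounded and F-measurable. Then P-almost everywhere the conditional expectation E_Q[Z | G] is strictly positive, and P-almost everywhere E_P[ψ | G] · E_Q[Z | G] = E_Q[ψ·Z | G]; equivalently, the Kallianpur–Striebel formula E_P[ψ | G] = E_Q[ψ·Z | G] / E_Q[Z | G] holds P-almost everywhere. -/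
open MeasureTheory
open scoped ENNReal NNReal

/-- Kallianpur–Striebel formula in abstract conditional-expectation form. -/
theorem kallianpur_striebel
    {Ω : Type*} (G : MeasurableSpace Ω) [F : MeasurableSpace Ω]
    (Q : Measure Ω) [IsProbabilityMeasure Q]
    (Z : Ω → ℝ) (hZmeas : Measurable Z) (hZnn : ∀ ω, 0 ≤ Z ω)
    (hZint : ∫ ω, Z ω ∂Q = 1)
    (P : Measure Ω)
    (hP : P = Q.withDensity (fun ω => ENNReal.ofReal (Z ω)))
    (hG : G ≤ F)
    (ψ : Ω → ℝ) (hψmeas : Measurable ψ) (C : ℝ) (hψbdd : ∀ ω, |ψ ω| ≤ C) :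
    (∀ᵐ ω ∂P, 0 < (Q[Z|G]) ω) ∧
    (∀ᵐ ω ∂P, (P[ψ|G]) ω * (Q[Z|G]) ω = (Q[fun ω => ψ ω * Z ω|G]) ω) ∧
    (∀ᵐ ω ∂P, (P[ψ|G]) ω = (Q[fun ω => ψ ω * Z ω|G]) ω / (Q[Z|G]) ω) := by
  letI : MeasurableSpace Ω := F
  have hψF : Measurable[F] ψ := hψmeas
  -- Basic integrability of Z
  have hZint' : Integrable Z Q := by
    by_contra h
    rw [integral_undef h] at hZint
    norm_num at hZint
  -- P is a probability measure
  have hPprob : IsProbabilityMeasure P := by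
    constructor
    rw [hP, withDensity_apply _ MeasurableSet.univ, Measure.restrict_univ,
      ← ofReal_integral_eq_lintegral_ofReal hZint' (ae_of_all _ hZnn), hZint]
    norm_num
  have hPabs : P ≪ Q := by rw [hP]; exact withDensity_absolutelyContinuous _ _
  -- transfer of set integrals from P to Q
  have hint_eq : ∀ (g : Ω → ℝ) (s : Set Ω), MeasurableSet[F] s →
      ∫ ω in s, g ω ∂P = ∫ ω in s, g ω * Z ω ∂Q := by
    intro g s hs
    rw [hP]
    have h1 : (fun ω => ENNReal.ofReal (Z ω))
        = fun ω => ((Z ω).toNNReal : ℝ≥0∞) := rfl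
    rw [h1, setIntegral_withDensity_eq_setIntegral_smul hZmeas.real_toNNReal g hs]
    refine setIntegral_congr_fun hs fun ω _ => ?_
    simp [NNReal.smul_def, Real.coe_toNNReal _ (hZnn ω), mul_comm]
  -- transfer of integrability from P to Q
  have hint_iff : ∀ g : Ω → ℝ, Integrable g P ↔ Integrable (fun ω => g ω * Z ω) Q := by
    intro g
    rw [hP, integrable_withDensity_iff hZmeas.ennreal_ofReal
      (ae_of_all _ fun ω => ENNReal.ofReal_lt_top)]
    have : (fun x => g x * (ENNReal.ofReal (Z x)).toReal) = fun x => g x * Z x := by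
      funext x; rw [ENNReal.toReal_ofReal (hZnn x)]
    rw [this]
  -- σ-finiteness of trimmed measures
  haveI : SigmaFinite (Q.trim hG) := inferInstance
  haveI : SigmaFinite (P.trim hG) := inferInstance
  -- Part 1: positivity of Q[Z|G] P-a.e.
  have part1 : ∀ᵐ ω ∂P, 0 < (Q[Z|G]) ω := by
    set A : Set Ω := (Q[Z|G]) ⁻¹' Set.Iic 0 with hAdef
    have hA : MeasurableSet[G] A :=
      stronglyMeasurable_condExp.measurable measurableSet_Iic
    have hAF : MeasurableSet[F] A := hG A hA
    have h2 : ∫ ω in A, Z ω ∂Q = ∫ ω in A, (Q[Z|G]) ω ∂Q :=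
      (setIntegral_condExp hG hZint' hA).symm
    have h3 : ∫ ω in A, (Q[Z|G]) ω ∂Q ≤ 0 :=
      setIntegral_nonpos hAF fun ω hω => hω
    have h4 : 0 ≤ ∫ ω in A, Z ω ∂Q :=
      setIntegral_nonneg hAF fun ω _ => hZnn ω
    have h5 : ∫ ω in A, Z ω ∂Q = 0 := le_antisymm (h2 ▸ h3) h4
    have h6 : Z =ᵐ[Q.restrict A] 0 :=
      (setIntegral_eq_zero_iff_of_nonneg_ae (ae_of_all _ fun ω => hZnn ω)
        hZint'.integrableOn).mp h5
    have hPA : P A = 0 := by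
      rw [hP, withDensity_apply _ hAF]
      have : ∀ᵐ ω ∂Q.restrict A, ENNReal.ofReal (Z ω) = 0 := by
        filter_upwards [h6] with ω hω
        simp [hω]
      rw [lintegral_congr_ae this, lintegral_zero]
    rw [ae_iff]
    convert hPA using 2
    ext ω
    simp [hAdef, not_lt]
  -- integrability facts
  have hψint_P : Integrable ψ P :=
    ⟨hψF.aestronglyMeasurable,
      HasFiniteIntegral.of_bounded (C := C) (ae_of_all _ fun ω => by
        simpa using hψbdd ω)⟩
  have hψZ_int : Integrable (fun ω => ψ ω * Z ω) Q :=
    hZint'.bdd_mul hψF.aestronglyMeasurable (c := C) (ae_of_all _ fun ω => by simpa using hψbdd ω)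
  -- the truncated version of P[ψ|G]
  set f : Ω → ℝ := fun ω => max (-C) (min C ((P[ψ|G]) ω)) with hfdef
  have hf_meas : StronglyMeasurable[G] f := by
    have hc : Measurable[G] (P[ψ|G]) := stronglyMeasurable_condExp.measurable
    exact (measurable_const.max (measurable_const.min hc)).stronglyMeasurable
  have hf_bdd : ∀ ω, ‖f ω‖ ≤ |C| := by
    intro ω
    rw [Real.norm_eq_abs, abs_le]
    constructor
    · exact le_max_of_le_left (neg_le_neg (le_abs_self C))
    · exact max_le (neg_le_abs C) ((min_le_left _ _).trans (le_abs_self C))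
  have hf_ae : f =ᵐ[P] P[ψ|G] := by
    rcases isEmpty_or_nonempty Ω with hΩ | hΩ
    · exact ae_of_all _ fun ω => (hΩ.false ω).elim
    have hC0 : 0 ≤ C := le_trans (abs_nonneg _) (hψbdd (Classical.arbitrary Ω))
    have hC : ∀ᵐ ω ∂P, |ψ ω| ≤ (C.toNNReal : ℝ) :=
      ae_of_all _ fun ω => (hψbdd ω).trans_eq (Real.coe_toNNReal C hC0).symm
    have hbd : ∀ᵐ ω ∂P, |(P[ψ|G]) ω| ≤ (C.toNNReal : ℝ) :=
      ae_bdd_condExp_of_ae_bdd hC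
    filter_upwards [hbd] with ω hω
    rw [Real.coe_toNNReal C hC0, abs_le] at hω
    simp [hfdef, min_eq_right hω.2, max_eq_right hω.1]
  -- integrability of products with Z
  have hfZ_int : Integrable (fun ω => f ω * Z ω) Q :=
    hZint'.bdd_mul (hf_meas.mono hG).aestronglyMeasurable (ae_of_all _ hf_bdd)
  have hfcond_int : Integrable (fun ω => f ω * (Q[Z|G]) ω) Q :=
    integrable_condExp.bdd_mul (hf_meas.mono hG).aestronglyMeasurable (ae_of_all _ hf_bdd)
  -- pull-out property
  have hpull : Q[fun ω => f ω * Z ω|G] =ᵐ[Q] fun ω => f ω * (Q[Z|G]) ω :=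
    condExp_mul_of_stronglyMeasurable_left hf_meas hfZ_int hZint'
  -- the key Q-a.e. identity
  have key : (fun ω => f ω * (Q[Z|G]) ω) =ᵐ[Q] Q[fun ω => ψ ω * Z ω|G] := by
    refine ae_eq_condExp_of_forall_setIntegral_eq hG hψZ_int
      (fun s _ _ => hfcond_int.integrableOn) (fun s hs _ => ?_)
      ((hf_meas.mul (stronglyMeasurable_condExp :
        StronglyMeasurable[G] (Q[Z|G]))).aestronglyMeasurable)
    have hsF : MeasurableSet[F] s := hG s hs
    calc ∫ ω in s, f ω * (Q[Z|G]) ω ∂Q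
        = ∫ ω in s, (Q[fun ω => f ω * Z ω|G]) ω ∂Q := by
          refine setIntegral_congr_ae hsF ?_
          filter_upwards [hpull] with ω hω _
          exact hω.symm
      _ = ∫ ω in s, f ω * Z ω ∂Q := setIntegral_condExp hG hfZ_int hs
      _ = ∫ ω in s, f ω ∂P := (hint_eq f s hsF).symm
      _ = ∫ ω in s, (P[ψ|G]) ω ∂P := by
          refine setIntegral_congr_ae hsF ?_
          filter_upwards [hf_ae] with ω hω _
          exact hω
      _ = ∫ ω in s, ψ ω ∂P := setIntegral_condExp hG hψint_P hs
      _ = ∫ ω in s, ψ ω * Z ω ∂Q := hint_eq ψ s hsF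
  -- Part 2
  have part2 : ∀ᵐ ω ∂P, (P[ψ|G]) ω * (Q[Z|G]) ω = (Q[fun ω => ψ ω * Z ω|G]) ω := by
    filter_upwards [hPabs.ae_le key, hf_ae] with ω h1 h2
    rw [← h2]
    exact h1
  refine ⟨part1, part2, ?_⟩
  filter_upwards [part1, part2] with ω h1 h2
  rw [eq_div_iff (ne_of_gt h1)]
  exact h2
end

section
/- For all real numbers u ≥ 0 and v ≥ 0 and every natural number n, one has (1 + u·v)^n − 1 ≤ ((1 + u)^n − 1) · max(v, v^n). -/
/-- The elementary estimate `(1 + u v)^n - 1 ≤ ((1 + u)^n - 1) * max v (v^n)`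
for nonnegative reals `u, v` and natural `n`. -/
theorem one_add_mul_pow_sub_one_le
    (u v : ℝ) (hu : 0 ≤ u) (hv : 0 ≤ v) (n : ℕ) :
    (1 + u * v) ^ n - 1 ≤ ((1 + u) ^ n - 1) * max v (v ^ n) := by
  have key : ∀ k : ℕ, 1 ≤ k → k ≤ n → v ^ k ≤ max v (v ^ n) := by
    intro k hk1 hkn
    rcases le_or_gt v 1 with h | h
    · refine le_trans ?_ (le_max_left _ _)
      calc v ^ k ≤ v ^ 1 := pow_le_pow_of_le_one hv h hk1
        _ = v := pow_one v
    · exact le_trans (pow_le_pow_right₀ h.le hkn) (le_max_right _ _)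
  have expand : ∀ x : ℝ, (x + 1) ^ n =
      (∑ i ∈ Finset.range n, x ^ (i + 1) * (n.choose (i + 1) : ℝ)) + 1 := by
    intro x
    rw [add_pow]
    rw [Finset.sum_range_succ']
    simp [mul_comm]
  have h1 : (1 + u * v) ^ n - 1 =
      ∑ i ∈ Finset.range n, (u * v) ^ (i + 1) * (n.choose (i + 1) : ℝ) := by
    rw [add_comm, expand]; ring
  have h2 : ((1 + u) ^ n - 1) * max v (v ^ n) =
      ∑ i ∈ Finset.range n, u ^ (i + 1) * (n.choose (i + 1) : ℝ) * max v (v ^ n) := by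
    rw [add_comm, expand, ← Finset.sum_mul]; ring
  rw [h1, h2]
  apply Finset.sum_le_sum
  intro i hi
  have hiv : v ^ (i + 1) ≤ max v (v ^ n) :=
    key (i + 1) (Nat.succ_le_succ (Nat.zero_le i)) (Finset.mem_range.mp hi)
  calc (u * v) ^ (i + 1) * (n.choose (i + 1) : ℝ)
      = u ^ (i + 1) * (n.choose (i + 1) : ℝ) * v ^ (i + 1) := by
        rw [mul_pow]; ring
    _ ≤ u ^ (i + 1) * (n.choose (i + 1) : ℝ) * max v (v ^ n) := by
        apply mul_le_mul_of_nonneg_left hiv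
        positivity
end

section
/- Let (X, A, m) be a probability space, H a measurable space, ξ : X → H measurable. Let (K, d) be a compact metric space with a finite Borel measure μ_K, T > 0, t ∈ (0, T], 0 < λ₋ ≤ λ₊. Let Λ : X × [0, T] × K → ℝ be measurable with λ₋ ≤ Λ ≤ λ₊ everywhere, and suppose that for every ω ∈ X the map (s, x) ↦ Λ(ω, s, x) is continuous on [0, T] × K. Fix observation points (s_1, y_1), …, (s_N, y_N) ∈ (0, t] × K. For each M ∈ ℕ, let K = K^M_1 ⊎ … ⊎ K^M_{n_M} be a partition into measurable sets with μ_K(K^M_i) > 0 and max_i diam(K^M_i) ≤ D_M, where D_M → 0; let θ_M(ω, s, y) be the average of Λ(ω, s, ·) over the cell K^M{y} containing y. Define z(ω) := exp( Σ_j log Λ(ω, s_j, y_j) − I(ω) ), z^M(ω) := exp( Σ_j log θ_M(ω, s_j, y_j) − I(ω) ) with I(ω) := ∫_0^t ∫_K (Λ(ω, s, x) − 1) dμ_K(x) ds, and the measures on H: ρ(A) := ∫_X 1_A(ξ(ω)) z(ω) dm(ω), ρ^M(A) := ∫_X 1_A(ξ(ω)) z^M(ω) dm(ω). Then sup over measurable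 A ⊆ H of |ρ^M(A) − ρ(A)| tends to 0 as M → ∞. -/
open MeasureTheory Filter Topology Metric
open scoped ENNReal

/-! The cell averages θ_M of the continuous intensity converge to its point values as the mesh
vanishes, so z^M → z pointwise. Averages stay in [λ₋, λ₊] and I ≥ t (λ₋ - 1) μ_K(K), so all z^M
are bounded by one constant, and dominated convergence gives ∫ |z^M - z| dm → 0. This bounds
|ρ^M(A) - ρ(A)| uniformly in A, because the weights 1_A ∘ ξ have absolute value at most 1. -/

theorem tendsto_smallSets_nhds_of_diam_le {K ι : Type*} [PseudoMetricSpace K] {l : Filter ι}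
    {S : ι → Set K} {y : K} {D : ι → ℝ} (hy : ∀ i, y ∈ S i) (hb : ∀ i, Bornology.IsBounded (S i))
    (hdiam : ∀ i, diam (S i) ≤ D i) (hD : Tendsto D l (𝓝 0)) : Tendsto S l (𝓝 y).smallSets := by
  rw [nhds_basis_closedBall.smallSets.tendsto_right_iff]
  intro ε hε
  filter_upwards [hD.eventually_le_const hε] with i hi w hw
  exact (dist_le_diam_of_mem (hb i) hw (hy i)).trans ((hdiam i).trans hi)

theorem tendsto_setAverage_of_tendsto_smallSets {K E ι : Type*} [TopologicalSpace K]
    [MeasurableSpace K] [NormedAddCommGroup E] [NormedSpace ℝ E] [CompleteSpace E]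
    {μ : Measure K} {l : Filter ι} {S : ι → Set K} {f : K → E} {y : K}
    (hf : ContinuousAt f y) (hS : Tendsto S l (𝓝 y).smallSets) (hSm : ∀ i, MeasurableSet (S i))
    (hμ0 : ∀ i, μ (S i) ≠ 0) (hμtop : ∀ i, μ (S i) ≠ ∞) (hfi : ∀ i, IntegrableOn f (S i) μ) :
    Tendsto (fun i => ⨍ x in S i, f x ∂μ) l (𝓝 (f y)) := by
  rw [nhds_basis_closedBall.tendsto_right_iff]
  intro ε hε
  have hnear : ∀ᶠ x in 𝓝 y, f x ∈ closedBall (f y) ε :=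
    hf.eventually (closedBall_mem_nhds _ hε)
  filter_upwards [hS.eventually (eventually_smallSets_forall.2 hnear)] with i hi
  exact (convex_closedBall _ _).set_average_mem isClosed_closedBall (hμ0 i) (hμtop i)
    (ae_restrict_of_forall_mem (hSm i) hi) (hfi i)

theorem measurable_setAverage {X K : Type*} [MeasurableSpace X] [MeasurableSpace K]
    {μ : Measure K} [SFinite μ] {F : X → K → ℝ} (hF : Measurable (Function.uncurry F))
    (S : Set K) : Measurable fun ω => ⨍ x in S, F ω x ∂μ := by
  simp_rw [setAverage_eq, smul_eq_mul]
  exact (hF.stronglyMeasurable.integral_prod_right' (ν := μ.restrict S)).measurable.const_mul _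

theorem measurable_intervalIntegral_integral {X K : Type*} [MeasurableSpace X] [MeasurableSpace K]
    {μ : Measure K} [SFinite μ] {F : X → ℝ → K → ℝ}
    (hF : Measurable fun p : X × ℝ × K => F p.1 p.2.1 p.2.2) (a b : ℝ) :
    Measurable fun ω => ∫ u in a..b, ∫ x, F ω u x ∂μ := by
  have hinner : StronglyMeasurable fun q : X × ℝ => ∫ x, F q.1 q.2 x ∂μ :=
    (hF.comp MeasurableEquiv.prodAssoc.measurable).stronglyMeasurable.integral_prod_right'
  simp_rw [intervalIntegral]
  exact (hinner.integral_prod_right'.measurable).sub hinner.integral_prod_right'.measurable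

theorem mul_le_intervalIntegral_integral {K : Type*} [TopologicalSpace K] [CompactSpace K]
    [MeasurableSpace K] [OpensMeasurableSpace K] {μ : Measure K} [IsFiniteMeasure μ]
    {F : ℝ → K → ℝ} (hF : Continuous (Function.uncurry F)) {c t : ℝ} (ht : 0 ≤ t)
    (hc : ∀ u x, c ≤ F u x) : t * (c * μ.real Set.univ) ≤ ∫ u in 0..t, ∫ x, F u x ∂μ := by
  have hcont : Continuous fun u => ∫ x, F u x ∂μ := by
    have := continuous_parametric_integral_of_continuous (Y := K) (μ := μ) hF isCompact_univ
    simpa using this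
  have hint : ∀ u, Integrable (F u) μ := fun u =>
    (hF.comp (Continuous.prodMk_right u)).integrable_of_hasCompactSupport
      (HasCompactSupport.of_compactSpace _)
  have h := intervalIntegral.integral_mono_on (μ := volume) ht intervalIntegrable_const
    (hcont.intervalIntegrable 0 t) fun u _ => (?_ : c * μ.real Set.univ ≤ _)
  · simpa [mul_left_comm] using h
  · simpa [mul_comm] using integral_mono (integrable_const c) (hint u) (hc u)

theorem exp_sum_log_sub_le {ι : Type*} [Fintype ι] {v : ι → ℝ} {b c I : ℝ}
    (hv : ∀ j, 0 < v j) (hvb : ∀ j, v j ≤ b) (hI : c ≤ I) :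
    Real.exp (∑ j, Real.log (v j) - I) ≤ Real.exp (Fintype.card ι * Real.log b - c) := by
  have hsum : ∑ j, Real.log (v j) ≤ Fintype.card ι * Real.log b :=
    calc ∑ j, Real.log (v j) ≤ ∑ _j : ι, Real.log b :=
          Finset.sum_le_sum fun j _ => Real.log_le_log (hv j) (hvb j)
      _ = Fintype.card ι * Real.log b := by simp
  gcongr

theorem tendsto_integral_abs_sub_of_tendsto {α : Type*} [MeasurableSpace α] {μ : Measure α}
    [IsFiniteMeasure μ] {F : ℕ → α → ℝ} {f : α → ℝ} {C : ℝ}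
    (hF : ∀ n, AEStronglyMeasurable (F n) μ) (hf : AEStronglyMeasurable f μ)
    (hFC : ∀ n a, |F n a| ≤ C) (hfC : ∀ a, |f a| ≤ C)
    (hlim : ∀ a, Tendsto (fun n => F n a) atTop (𝓝 (f a))) :
    Tendsto (fun n => ∫ a, |F n a - f a| ∂μ) atTop (𝓝 0) := by
  have h := tendsto_integral_of_dominated_convergence (μ := μ) (f := fun _ => (0 : ℝ))
    (fun _ => C + C) (fun n => continuous_abs.comp_aestronglyMeasurable ((hF n).sub hf))
    (integrable_const _)
    (fun n => ae_of_all _ fun a => ?_) (ae_of_all _ fun a => ?_)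
  · simpa using h
  · simpa using (abs_sub _ _).trans (add_le_add (hFC n a) (hfC a))
  · simpa using ((hlim a).sub_const (f a)).abs

theorem abs_integral_mul_sub_integral_mul_le {α : Type*} [MeasurableSpace α] {μ : Measure α}
    {φ f g : α → ℝ} (hφ : AEStronglyMeasurable φ μ) (hφ1 : ∀ a, |φ a| ≤ 1)
    (hf : Integrable f μ) (hg : Integrable g μ) :
    |∫ a, φ a * f a ∂μ - ∫ a, φ a * g a ∂μ| ≤ ∫ a, |f a - g a| ∂μ := by
  have hφb : ∀ᵐ a ∂μ, ‖φ a‖ ≤ 1 := ae_of_all _ hφ1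
  rw [← integral_sub (hf.bdd_mul hφ hφb) (hg.bdd_mul hφ hφb)]
  refine abs_integral_le_integral_abs.trans (integral_mono_of_nonneg ?_ (hf.sub hg).abs ?_)
  · exact ae_of_all _ fun a => abs_nonneg _
  · refine ae_of_all _ fun a => ?_
    simpa [← mul_sub, abs_mul] using mul_le_of_le_one_left (abs_nonneg _) (hφ1 a)

theorem eventually_abs_integral_mul_sub_le {α : Type*} [MeasurableSpace α] {μ : Measure α}
    [IsFiniteMeasure μ] {F : ℕ → α → ℝ} {f : α → ℝ} {C : ℝ}
    (hF : ∀ n, AEStronglyMeasurable (F n) μ) (hFC : ∀ n a, |F n a| ≤ C)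
    (hlim : ∀ a, Tendsto (fun n => F n a) atTop (𝓝 (f a))) (ε : ℝ) (hε : 0 < ε) :
    ∀ᶠ n in atTop, ∀ φ : α → ℝ, AEStronglyMeasurable φ μ → (∀ a, |φ a| ≤ 1) →
      |∫ a, φ a * F n a ∂μ - ∫ a, φ a * f a ∂μ| ≤ ε := by
  have hf : AEStronglyMeasurable f μ :=
    aestronglyMeasurable_of_tendsto_ae atTop hF (ae_of_all _ hlim)
  have hfC : ∀ a, |f a| ≤ C := fun a => le_of_tendsto' (hlim a).abs fun n => hFC n a
  filter_upwards [(tendsto_integral_abs_sub_of_tendsto hF hf hFC hfC hlim).eventually_le_const hε]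
    with n hn φ hφ hφ1
  exact (abs_integral_mul_sub_integral_mul_le hφ hφ1 (.of_bound (hF n) C (ae_of_all _ (hFC n)))
    (.of_bound hf C (ae_of_all _ hfC))).trans hn

theorem zakai_discretization_convergence_general
    {X : Type*} [MeasurableSpace X] (m : Measure X) [IsProbabilityMeasure m]
    {H : Type*} [MeasurableSpace H] (ξ : X → H) (hξ : Measurable ξ)
    {K : Type*} [MetricSpace K] [CompactSpace K]
    [MeasurableSpace K] [OpensMeasurableSpace K]
    (μK : Measure K) [IsFiniteMeasure μK]
    (t : ℝ) (ht : 0 < t)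
    (lm lp : ℝ) (hlm : 0 < lm)
    (Λ : X → ℝ → K → ℝ)
    (hmeas : Measurable (fun p : X × ℝ × K => Λ p.1 p.2.1 p.2.2))
    (hlow : ∀ ω s x, lm ≤ Λ ω s x) (hhigh : ∀ ω s x, Λ ω s x ≤ lp)
    (hcont : ∀ ω, Continuous (fun p : ℝ × K => Λ ω p.1 p.2))
    (N : ℕ) (s : Fin N → ℝ) (y : Fin N → K)
    (nM : ℕ → ℕ) (part : (M : ℕ) → Fin (nM M) → Set K)
    (hpmeas : ∀ M i, MeasurableSet (part M i))
    (hppos : ∀ M i, 0 < μK (part M i))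
    (D : ℕ → ℝ)
    (hdiam : ∀ M i, Metric.diam (part M i) ≤ D M)
    (hDlim : Tendsto D atTop (nhds 0))
    (cell : (M : ℕ) → K → Fin (nM M)) (hcell : ∀ M x, x ∈ part M (cell M x))
    (θ : ℕ → X → ℝ → K → ℝ)
    (hθ : ∀ M ω u x, θ M ω u x =
      (μK (part M (cell M x))).toReal⁻¹ * ∫ w in part M (cell M x), Λ ω u w ∂μK)
    (I : X → ℝ)
    (hI : ∀ ω, I ω = ∫ u in (0 : ℝ)..t, ∫ x, (Λ ω u x - 1) ∂μK)
    (z : X → ℝ) (zM : ℕ → X → ℝ)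
    (hz : ∀ ω, z ω = Real.exp ((∑ j, Real.log (Λ ω (s j) (y j))) - I ω))
    (hzM : ∀ M ω, zM M ω = Real.exp ((∑ j, Real.log (θ M ω (s j) (y j))) - I ω))
    (ρ : Set H → ℝ) (ρM : ℕ → Set H → ℝ)
    (hρ : ∀ A : Set H, ρ A = ∫ ω, Set.indicator A (fun _ => (1 : ℝ)) (ξ ω) * z ω ∂m)
    (hρM : ∀ M, ∀ A : Set H,
      ρM M A = ∫ ω, Set.indicator A (fun _ => (1 : ℝ)) (ξ ω) * zM M ω ∂m) :
    ∀ ε > (0 : ℝ), ∃ M₀ : ℕ, ∀ M ≥ M₀, ∀ A : Set H, MeasurableSet A →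
      |ρM M A - ρ A| ≤ ε := by
  have hΛint : ∀ ω u, Integrable (Λ ω u) μK := fun ω u =>
    ((hcont ω).comp (Continuous.prodMk_right u)).integrable_of_hasCompactSupport
      (HasCompactSupport.of_compactSpace _)
  have hθavg : ∀ M ω u x, θ M ω u x = ⨍ w in part M (cell M x), Λ ω u w ∂μK := fun M ω u x => by
    rw [hθ, setAverage_eq, smul_eq_mul, measureReal_def]
  have hθmem : ∀ M ω u x, θ M ω u x ∈ Set.Icc lm lp := fun M ω u x => by
    rw [hθavg]
    exact (convex_Icc lm lp).set_average_mem isClosed_Icc (hppos M _).ne' (measure_ne_top _ _)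
      (ae_restrict_of_forall_mem (hpmeas M _) fun w _ => ⟨hlow ω u w, hhigh ω u w⟩)
      (hΛint ω u).integrableOn
  have hθmeas : ∀ M u x, Measurable fun ω => θ M ω u x := fun M u x => by
    simp_rw [hθavg]
    exact measurable_setAverage (F := fun ω w => Λ ω u w)
      (hmeas.comp (f := fun p : X × K => (p.1, u, p.2)) (by fun_prop)) _
  have hθtend : ∀ ω j, Tendsto (fun M => θ M ω (s j) (y j)) atTop (𝓝 (Λ ω (s j) (y j))) := by
    intro ω j
    simp_rw [hθavg]
    exact tendsto_setAverage_of_tendsto_smallSets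
      ((hcont ω).comp (Continuous.prodMk_right (s j))).continuousAt
      (tendsto_smallSets_nhds_of_diam_le (hcell · (y j)) (fun _ => isBounded_of_compactSpace)
        (hdiam · _) hDlim)
      (hpmeas · _) (fun M => (hppos M _).ne') (fun _ => measure_ne_top _ _)
      (fun _ => (hΛint ω _).integrableOn)
  have hIlb : ∀ ω, t * ((lm - 1) * μK.real Set.univ) ≤ I ω := fun ω => by
    rw [hI]
    exact mul_le_intervalIntegral_integral ((hcont ω).sub continuous_const) ht.le
      fun u x => by linarith [hlow ω u x]
  have hImeas : Measurable I := by
    rw [funext hI]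
    exact measurable_intervalIntegral_integral (hmeas.sub measurable_const) 0 t
  have hzMC : ∀ M ω, |zM M ω| ≤ Real.exp (N * Real.log lp - t * ((lm - 1) * μK.real Set.univ)) := by
    intro M ω
    rw [hzM, abs_of_pos (Real.exp_pos _)]
    simpa using exp_sum_log_sub_le (v := fun j => θ M ω (s j) (y j))
      (fun j => hlm.trans_le (hθmem M ω _ _).1) (fun j => (hθmem M ω _ _).2) (hIlb ω)
  have hzMmeas : ∀ M, Measurable (zM M) := fun M => by
    rw [funext (hzM M)]
    have := hθmeas M
    fun_prop
  have hzMtend : ∀ ω, Tendsto (fun M => zM M ω) atTop (𝓝 (z ω)) := fun ω => by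
    simp_rw [hzM, hz]
    exact ((tendsto_finsetSum _ fun j _ =>
      (hθtend ω j).log (hlm.trans_le (hlow ω _ _)).ne').sub_const _).rexp
  intro ε hε
  obtain ⟨M₀, hM₀⟩ := eventually_atTop.1 (eventually_abs_integral_mul_sub_le (μ := m)
    (fun M => (hzMmeas M).aestronglyMeasurable) hzMC hzMtend ε hε)
  refine ⟨M₀, fun M hM A hA => ?_⟩
  rw [hρM, hρ]
  exact hM₀ M hM _ ((measurable_const.indicator hA).comp hξ).aestronglyMeasurable
    fun ω => by by_cases h : ξ ω ∈ A <;> simp [h]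

/-- Consistency of the unnormalized (Zakai) posterior: as the mesh of the spatial
partitions tends to zero, the discretized posteriors converge to the exact
posterior in total variation (uniformly over measurable sets). -/
theorem zakai_discretization_convergence
    {X : Type*} [MeasurableSpace X] (m : Measure X) [IsProbabilityMeasure m]
    {H : Type*} [MeasurableSpace H] (ξ : X → H) (hξ : Measurable ξ)
    {K : Type*} [MetricSpace K] [CompactSpace K]
    [MeasurableSpace K] [OpensMeasurableSpace K]
    (μK : Measure K) [IsFiniteMeasure μK]
    (T t : ℝ) (hT : 0 < T) (ht : 0 < t) (htT : t ≤ T)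
    (lm lp : ℝ) (hlm : 0 < lm) (hlmp : lm ≤ lp)
    (Λ : X → ℝ → K → ℝ)
    (hmeas : Measurable (fun p : X × ℝ × K => Λ p.1 p.2.1 p.2.2))
    (hlow : ∀ ω s x, lm ≤ Λ ω s x) (hhigh : ∀ ω s x, Λ ω s x ≤ lp)
    (hcont : ∀ ω, Continuous (fun p : ℝ × K => Λ ω p.1 p.2))
    (N : ℕ) (s : Fin N → ℝ) (y : Fin N → K)
    (hs : ∀ j, s j ∈ Set.Ioc (0 : ℝ) t)
    (nM : ℕ → ℕ) (part : (M : ℕ) → Fin (nM M) → Set K)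
    (hpmeas : ∀ M i, MeasurableSet (part M i))
    (hdisj : ∀ M, Pairwise (Function.onFun Disjoint (part M)))
    (hcover : ∀ M, (⋃ i, part M i) = Set.univ)
    (hppos : ∀ M i, 0 < μK (part M i))
    (D : ℕ → ℝ) (hD : ∀ M, 0 ≤ D M)
    (hdiam : ∀ M i, Metric.diam (part M i) ≤ D M)
    (hDlim : Tendsto D atTop (nhds 0))
    (cell : (M : ℕ) → K → Fin (nM M)) (hcell : ∀ M x, x ∈ part M (cell M x))
    (θ : ℕ → X → ℝ → K → ℝ)
    (hθ : ∀ M ω u x, θ M ω u x =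
      (μK (part M (cell M x))).toReal⁻¹ * ∫ w in part M (cell M x), Λ ω u w ∂μK)
    (I : X → ℝ)
    (hI : ∀ ω, I ω = ∫ u in (0 : ℝ)..t, ∫ x, (Λ ω u x - 1) ∂μK)
    (z : X → ℝ) (zM : ℕ → X → ℝ)
    (hz : ∀ ω, z ω = Real.exp ((∑ j, Real.log (Λ ω (s j) (y j))) - I ω))
    (hzM : ∀ M ω, zM M ω = Real.exp ((∑ j, Real.log (θ M ω (s j) (y j))) - I ω))
    (ρ : Set H → ℝ) (ρM : ℕ → Set H → ℝ)
    (hρ : ∀ A : Set H, ρ A = ∫ ω, Set.indicator A (fun _ => (1 : ℝ)) (ξ ω) * z ω ∂m)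
    (hρM : ∀ M, ∀ A : Set H,
      ρM M A = ∫ ω, Set.indicator A (fun _ => (1 : ℝ)) (ξ ω) * zM M ω ∂m) :
    ∀ ε > (0 : ℝ), ∃ M₀ : ℕ, ∀ M ≥ M₀, ∀ A : Set H, MeasurableSet A →
      |ρM M A - ρ A| ≤ ε :=
  zakai_discretization_convergence_general m ξ hξ μK t ht lm lp hlm Λ hmeas hlow hhigh hcont N s y
    nM part hpmeas hppos D hdiam hDlim cell hcell θ hθ I hI z zM hz hzM ρ ρM hρ hρM
end

section
/- Under the setup of the unnormalized posterior convergence statement — (X, A, m) a probability space, ξ : X → H measurable, (K, d) a compact metric space with finite Borel measure μ_K, T > 0, t ∈ (0, T], 0 < λ₋ ≤ λ₊, Λ : X × [0, T] × K → ℝ measurable with λ₋ ≤ Λ ≤ λ₊ and (s, x) ↦ Λ(ω, s, x) continuous for every ω; observation points (s_1, y_1), …, (s_N, y_N) ∈ (0, t] × K; a sequence of measurable partitions of K with positive-measure cells and mesh D_M → 0; θ_M the cell-averaged intensities; z, z^M the corresponding likelihoods and ρ(A) := ∫ 1_A(ξ) z dm, ρ^M(A) := ∫ 1_A(ξ) z^M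 dm — define the normalized posterior probability measures η(A) := ρ(A)/ρ(H) and η^M(A) := ρ^M(A)/ρ^M(H) (the denominators are strictly positive since z, z^M are bounded below by a positive constant). Then sup over measurable A ⊆ H of |η^M(A) − η(A)| tends to 0 as M → ∞. -/
/-!
Each cell average `θ_M(ω, s_j, y_j)` tends to `Λ(ω, s_j, y_j)`, because `Λ(ω, s_j, ·)` is
continuous at `y_j` and the cells containing `y_j` shrink to it. Both intensities stay in
`[λ₋, λ₊]` and `I` is bounded, so the likelihoods `z^M` are uniformly bounded and `z^M → z` in
`L¹(m)` by dominated convergence. Finally `|ρ^M(A) - ρ(A)| ≤ ‖z^M - z‖₁` uniformly in `A` and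
`ρ(H) = ∫ z dm > 0`, so the normalized posteriors converge uniformly.
-/

open MeasureTheory Filter Topology Set

theorem abs_div_sub_div_le {a b a' b' : ℝ} (ha : 0 ≤ a) (hab : a ≤ b) (hb : 0 < b)
    (hb' : 0 < b') :
    |a' / b' - a / b| ≤ (|a' - a| + |b' - b|) / b' := by
  have hsplit : a' / b' - a / b = ((a' - a) + a / b * (b - b')) / b' := by
    field_simp; ring
  have hratio : |a / b| ≤ 1 := by
    rw [abs_of_nonneg (div_nonneg ha hb.le)]; exact div_le_one_of_le₀ hab hb.le
  rw [hsplit, abs_div, abs_of_pos hb']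
  gcongr
  calc |(a' - a) + a / b * (b - b')| ≤ |a' - a| + |a / b| * |b - b'| := by
        rw [← abs_mul]; exact abs_add_le _ _
    _ ≤ |a' - a| + |b' - b| := by
        rw [abs_sub_comm b]; gcongr; exact mul_le_of_le_one_left (abs_nonneg _) hratio

section

variable {α E : Type*} [MeasurableSpace α] {μ : Measure α} [NormedAddCommGroup E]

theorem norm_setIntegral_sub_setIntegral_le [NormedSpace ℝ E] {f g : α → E}
    (hf : Integrable f μ) (hg : Integrable g μ) (s : Set α) :
    ‖∫ x in s, f x ∂μ - ∫ x in s, g x ∂μ‖ ≤ ∫ x, ‖f x - g x‖ ∂μ := by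
  rw [← integral_sub hf.integrableOn hg.integrableOn]
  exact (norm_integral_le_integral_norm _).trans
    (setIntegral_le_integral (hf.sub hg).norm (ae_of_all _ fun _ => norm_nonneg _))

theorem tendsto_integral_norm_sub_of_dominated_convergence {F : ℕ → α → E} {f : α → E}
    (bound : α → ℝ) (F_measurable : ∀ n, AEStronglyMeasurable (F n) μ)
    (bound_integrable : Integrable bound μ) (h_bound : ∀ n, ∀ᵐ a ∂μ, ‖F n a‖ ≤ bound a)
    (h_lim : ∀ᵐ a ∂μ, Tendsto (fun n => F n a) atTop (𝓝 (f a))) :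
    Tendsto (fun n => ∫ a, ‖F n a - f a‖ ∂μ) atTop (𝓝 0) := by
  have f_measurable : AEStronglyMeasurable f μ :=
    aestronglyMeasurable_of_tendsto_ae _ F_measurable h_lim
  have hlintegral := tendsto_lintegral_norm_of_dominated_convergence F_measurable
    bound_integrable.hasFiniteIntegral h_bound h_lim
  have hnorm : ∀ n, ∫ a, ‖F n a - f a‖ ∂μ = (∫⁻ a, ‖F n a - f a‖ₑ ∂μ).toReal := fun n =>
    integral_norm_eq_lintegral_enorm ((F_measurable n).sub f_measurable)
  simp_rw [hnorm]
  simp only [ofReal_norm] at hlintegral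
  exact (ENNReal.tendsto_toReal ENNReal.zero_ne_top).comp hlintegral

end

section

variable {α ι : Type*} [MeasurableSpace α] {μ : Measure α} {l : Filter ι}

theorem tendstoUniformly_setIntegral_div_integral {f : α → ℝ} {F : ι → α → ℝ}
    (hf : Integrable f μ) (hf_nonneg : 0 ≤ᵐ[μ] f) (hf_pos : 0 < ∫ x, f x ∂μ)
    (hF : ∀ i, Integrable (F i) μ) (hlim : Tendsto (fun i => ∫ x, ‖F i x - f x‖ ∂μ) l (𝓝 0)) :
    TendstoUniformly (fun i s => (∫ x in s, F i x ∂μ) / ∫ x, F i x ∂μ)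
      (fun s => (∫ x in s, f x ∂μ) / ∫ x, f x ∂μ) l := by
  set b := ∫ x, f x ∂μ
  rw [Metric.tendstoUniformly_iff]
  intro ε hε
  filter_upwards [hlim.eventually_lt_const (show 0 < b / 2 by positivity),
    hlim.eventually_lt_const (show 0 < ε * b / 4 by positivity)] with i hhalf hsmall s
  set e := ∫ x, ‖F i x - f x‖ ∂μ
  have hdiff : ∀ t : Set α, |∫ x in t, F i x ∂μ - ∫ x in t, f x ∂μ| ≤ e := fun t =>
    norm_setIntegral_sub_setIntegral_le (hF i) hf t
  have htotal : |∫ x, F i x ∂μ - b| ≤ e := by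
    simpa only [Measure.restrict_univ] using hdiff univ
  have hb' : b / 2 < ∫ x, F i x ∂μ := by linarith [(abs_le.1 htotal).1]
  rw [dist_comm, Real.dist_eq]
  calc _ ≤ (|∫ x in s, F i x ∂μ - ∫ x in s, f x ∂μ| + |∫ x, F i x ∂μ - b|) / ∫ x, F i x ∂μ :=
        abs_div_sub_div_le (setIntegral_nonneg_of_ae_restrict (ae_restrict_of_ae hf_nonneg))
          (setIntegral_le_integral hf hf_nonneg) hf_pos (by linarith)
    _ ≤ (e + e) / (b / 2) := by gcongr; exact hdiff s
    _ < ε := by rw [div_lt_iff₀ (by positivity)]; linarith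

end

theorem tendsto_smallSets_nhds_of_tendsto_diam {X ι : Type*} [PseudoMetricSpace X] {x : X}
    {l : Filter ι} {s : ι → Set X} (hx : ∀ i, x ∈ s i) (hbdd : ∀ i, Bornology.IsBounded (s i))
    (hdiam : Tendsto (fun i => Metric.diam (s i)) l (𝓝 0)) :
    Tendsto s l (𝓝 x).smallSets := by
  refine Metric.nhds_basis_ball.smallSets.tendsto_right_iff.2 fun δ hδ => ?_
  filter_upwards [hdiam.eventually_lt_const hδ] with i hi y hy
  exact (Metric.dist_le_diam_of_mem (hbdd i) hy (hx i)).trans_lt hi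

theorem ContinuousAt.tendsto_setAverage {X ι : Type*} [TopologicalSpace X] [MeasurableSpace X]
    [OpensMeasurableSpace X] {μ : Measure X} [IsLocallyFiniteMeasure μ] {x : X} {f : X → ℝ}
    (hx : ContinuousAt f x) (hfm : StronglyMeasurableAtFilter f (𝓝 x) μ) {l : Filter ι}
    {s : ι → Set X} (hs : Tendsto s l (𝓝 x).smallSets) (h0 : ∀ i, μ (s i) ≠ 0) :
    Tendsto (fun i => ⨍ y in s i, f y ∂μ) l (𝓝 (f x)) := by
  have hfin : ∀ᶠ i in l, μ (s i) < ⊤ := hs.eventually (μ.finiteAt_nhds x).eventually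
  have hsmall := (hx.integral_sub_linear_isLittleO_ae hfm hs).tendsto_div_nhds_zero
  rw [← tendsto_sub_nhds_zero_iff]
  refine hsmall.congr' (hfin.mono fun i hi => ?_)
  have hreal : μ.real (s i) ≠ 0 := (ENNReal.toReal_pos (h0 i) hi.ne).ne'
  dsimp only
  rw [setAverage_eq, smul_eq_mul, smul_eq_mul]
  field_simp

section

variable {α β : Type*} [MeasurableSpace α] [MeasurableSpace β] {μ : Measure β}

theorem setAverage_mem_Icc [IsFiniteMeasure μ] {f : β → ℝ} {a b : ℝ} {s : Set β}
    (hf : AEStronglyMeasurable f μ) (hfab : ∀ x, f x ∈ Icc a b) (hs : μ s ≠ 0) :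
    ⨍ x in s, f x ∂μ ∈ Icc a b :=
  (convex_Icc a b).set_average_mem isClosed_Icc hs (measure_ne_top _ _) (ae_of_all _ hfab)
    (Integrable.of_bound hf (max |a| |b|) (ae_of_all _ fun x =>
      abs_le_max_abs_abs (hfab x).1 (hfab x).2)).integrableOn

theorem Measurable.setAverage_prod_right' [SFinite μ] {f : α × β → ℝ} (hf : Measurable f)
    (s : Set β) : Measurable fun x => ⨍ y in s, f (x, y) ∂μ := by
  simp only [setAverage_eq, smul_eq_mul]
  exact (hf.stronglyMeasurable.integral_prod_right' (ν := μ.restrict s)).measurable.const_mul _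

end

theorem MeasureTheory.StronglyMeasurable.intervalIntegral_prod_right {α E : Type*}
    [MeasurableSpace α] [NormedAddCommGroup E] [NormedSpace ℝ E] {f : α → ℝ → E}
    (hf : StronglyMeasurable (Function.uncurry f)) (a b : ℝ) :
    StronglyMeasurable fun x => ∫ t in a..b, f x t :=
  hf.integral_prod_right'.sub hf.integral_prod_right'

section

variable {α β : Type*} [MeasurableSpace α] [MeasurableSpace β]

theorem Measurable.intervalIntegral_integral {f : α → ℝ → β → ℝ}
    (hf : Measurable fun p : α × ℝ × β => f p.1 p.2.1 p.2.2) (ν : Measure β) [SFinite ν]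
    (a b : ℝ) : Measurable fun x => ∫ t in a..b, ∫ y, f x t y ∂ν := by
  have hinner : StronglyMeasurable (Function.uncurry fun x t => ∫ y, f x t y ∂ν) :=
    (hf.comp MeasurableEquiv.prodAssoc.measurable).stronglyMeasurable.integral_prod_right'
  exact (hinner.intervalIntegral_prod_right a b).measurable

theorem norm_intervalIntegral_integral_le {E : Type*} [NormedAddCommGroup E] [NormedSpace ℝ E]
    {f : ℝ → β → E} {C : ℝ} (ν : Measure β) [IsFiniteMeasure ν] (hf : ∀ t y, ‖f t y‖ ≤ C)
    (a b : ℝ) : ‖∫ t in a..b, ∫ y, f t y ∂ν‖ ≤ C * ν.real univ * |b - a| :=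
  intervalIntegral.norm_integral_le_of_norm_le_const fun t _ =>
    norm_integral_le_of_norm_le_const (ae_of_all ν (hf t))

end

section

open Real

variable {ι X : Type*} [Fintype ι] [MeasurableSpace X] {μ : Measure X}

theorem exp_sum_log_sub_le_s16 {v : ι → ℝ} {c i C : ℝ} (hv_pos : ∀ j, 0 < v j)
    (hv_le : ∀ j, v j ≤ c) (hi : |i| ≤ C) :
    exp (∑ j, log (v j) - i) ≤ exp (Fintype.card ι * log c + C) := by
  have hsum : ∑ j, log (v j) ≤ ∑ _j : ι, log c :=
    Finset.sum_le_sum fun j _ => log_le_log (hv_pos j) (hv_le j)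
  rw [Finset.sum_const, Finset.card_univ, nsmul_eq_mul] at hsum
  gcongr
  linarith [(abs_le.1 hi).1]

theorem integrable_exp_sum_log_sub [IsFiniteMeasure μ] {g : X → ι → ℝ} {I : X → ℝ} {c C : ℝ}
    (hg_meas : ∀ j, Measurable (g · j)) (hI_meas : Measurable I) (hg_pos : ∀ ω j, 0 < g ω j)
    (hg_le : ∀ ω j, g ω j ≤ c) (hI : ∀ ω, |I ω| ≤ C) :
    Integrable (fun ω => exp (∑ j, log (g ω j) - I ω)) μ := by
  refine Integrable.of_bound (by fun_prop : Measurable _).aestronglyMeasurable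
    (exp (Fintype.card ι * log c + C)) (ae_of_all _ fun ω => ?_)
  rw [norm_of_nonneg (exp_pos _).le]
  exact exp_sum_log_sub_le_s16 (hg_pos ω) (hg_le ω) (hI ω)

theorem tendsto_integral_norm_exp_sum_log_sub [IsFiniteMeasure μ] {G : ℕ → X → ι → ℝ}
    {g : X → ι → ℝ} {I : X → ℝ} {a b C : ℝ} (ha : 0 < a) (hG_meas : ∀ n j, Measurable (G n · j))
    (hI_meas : Measurable I) (hG : ∀ n ω j, G n ω j ∈ Icc a b) (hI : ∀ ω, |I ω| ≤ C)
    (hlim : ∀ ω j, Tendsto (G · ω j) atTop (𝓝 (g ω j))) :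
    Tendsto (fun n => ∫ ω, ‖exp (∑ j, log (G n ω j) - I ω) - exp (∑ j, log (g ω j) - I ω)‖ ∂μ)
      atTop (𝓝 0) := by
  refine tendsto_integral_norm_sub_of_dominated_convergence
    (fun _ => exp (Fintype.card ι * log b + C))
    (fun n => (by fun_prop : Measurable _).aestronglyMeasurable) (integrable_const _)
    (fun n => ae_of_all _ fun ω => ?_) (ae_of_all _ fun ω => ?_)
  · rw [norm_of_nonneg (exp_pos _).le]
    exact exp_sum_log_sub_le_s16 (fun j => ha.trans_le (hG n ω j).1) (fun j => (hG n ω j).2) (hI ω)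
  · have hg_pos : ∀ j, 0 < g ω j := fun j =>
      ha.trans_le (ge_of_tendsto' (hlim ω j) fun n => (hG n ω j).1)
    exact ((tendsto_finsetSum _ fun j _ => (hlim ω j).log (hg_pos j).ne').sub_const _).rexp

theorem tendstoUniformly_setIntegral_exp_sum_log_sub_div_integral [IsFiniteMeasure μ] [NeZero μ]
    {G : ℕ → X → ι → ℝ} {g : X → ι → ℝ} {I : X → ℝ} {a b C : ℝ} (ha : 0 < a)
    (hG_meas : ∀ n j, Measurable (G n · j)) (hg_meas : ∀ j, Measurable (g · j))
    (hI_meas : Measurable I) (hG : ∀ n ω j, G n ω j ∈ Icc a b) (hg : ∀ ω j, g ω j ∈ Icc a b)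
    (hI : ∀ ω, |I ω| ≤ C) (hlim : ∀ ω j, Tendsto (G · ω j) atTop (𝓝 (g ω j))) :
    TendstoUniformly
      (fun n s => (∫ ω in s, exp (∑ j, log (G n ω j) - I ω) ∂μ) /
        ∫ ω, exp (∑ j, log (G n ω j) - I ω) ∂μ)
      (fun s => (∫ ω in s, exp (∑ j, log (g ω j) - I ω) ∂μ) /
        ∫ ω, exp (∑ j, log (g ω j) - I ω) ∂μ) atTop := by
  have hg_int : Integrable (fun ω => exp (∑ j, log (g ω j) - I ω)) μ :=
    integrable_exp_sum_log_sub hg_meas hI_meas (fun ω j => ha.trans_le (hg ω j).1)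
      (fun ω j => (hg ω j).2) hI
  refine tendstoUniformly_setIntegral_div_integral hg_int (ae_of_all _ fun ω => (exp_pos _).le)
    (integral_exp_pos hg_int) (fun n => ?_) (tendsto_integral_norm_exp_sum_log_sub ha hG_meas
      hI_meas hG hI hlim)
  exact integrable_exp_sum_log_sub (hG_meas n) hI_meas (fun ω j => ha.trans_le (hG n ω j).1)
    (fun ω j => (hG n ω j).2) hI

end

theorem integral_indicator_one_comp_mul {X H : Type*} [MeasurableSpace X] [MeasurableSpace H]
    {m : Measure X} {ξ : X → H} (hξ : Measurable ξ) {A : Set H} (hA : MeasurableSet A)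
    (f : X → ℝ) :
    ∫ ω, A.indicator (fun _ => (1 : ℝ)) (ξ ω) * f ω ∂m = ∫ ω in ξ ⁻¹' A, f ω ∂m := by
  rw [← integral_indicator (hξ hA)]
  congr 1 with ω
  by_cases h : ξ ω ∈ A <;> simp [h]


theorem kushner_stratonovich_discretization_convergence_general
    {X : Type*} [MeasurableSpace X] (m : Measure X) [IsProbabilityMeasure m]
    {H : Type*} [MeasurableSpace H] (ξ : X → H) (hξ : Measurable ξ)
    {K : Type*} [MetricSpace K] [CompactSpace K]
    [MeasurableSpace K] [OpensMeasurableSpace K]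
    (μK : Measure K) [IsFiniteMeasure μK]
    (t : ℝ)
    (lm lp : ℝ) (hlm : 0 < lm)
    (Λ : X → ℝ → K → ℝ)
    (hmeas : Measurable (fun p : X × ℝ × K => Λ p.1 p.2.1 p.2.2))
    (hlow : ∀ ω s x, lm ≤ Λ ω s x) (hhigh : ∀ ω s x, Λ ω s x ≤ lp)
    (hcont : ∀ ω, Continuous (fun p : ℝ × K => Λ ω p.1 p.2))
    (N : ℕ) (s : Fin N → ℝ) (y : Fin N → K)
    (nM : ℕ → ℕ) (part : (M : ℕ) → Fin (nM M) → Set K)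
    (hppos : ∀ M i, 0 < μK (part M i))
    (D : ℕ → ℝ)
    (hdiam : ∀ M i, Metric.diam (part M i) ≤ D M)
    (hDlim : Tendsto D atTop (nhds 0))
    (cell : (M : ℕ) → K → Fin (nM M)) (hcell : ∀ M x, x ∈ part M (cell M x))
    (θ : ℕ → X → ℝ → K → ℝ)
    (hθ : ∀ M ω u x, θ M ω u x =
      (μK (part M (cell M x))).toReal⁻¹ * ∫ w in part M (cell M x), Λ ω u w ∂μK)
    (I : X → ℝ)
    (hI : ∀ ω, I ω = ∫ u in (0 : ℝ)..t, ∫ x, (Λ ω u x - 1) ∂μK)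
    (z : X → ℝ) (zM : ℕ → X → ℝ)
    (hz : ∀ ω, z ω = Real.exp ((∑ j, Real.log (Λ ω (s j) (y j))) - I ω))
    (hzM : ∀ M ω, zM M ω = Real.exp ((∑ j, Real.log (θ M ω (s j) (y j))) - I ω))
    (ρ : Set H → ℝ) (ρM : ℕ → Set H → ℝ)
    (hρ : ∀ A : Set H, ρ A = ∫ ω, Set.indicator A (fun _ => (1 : ℝ)) (ξ ω) * z ω ∂m)
    (hρM : ∀ M, ∀ A : Set H,
      ρM M A = ∫ ω, Set.indicator A (fun _ => (1 : ℝ)) (ξ ω) * zM M ω ∂m)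
    (η : Set H → ℝ) (ηM : ℕ → Set H → ℝ)
    (hη : ∀ A : Set H, η A = ρ A / ρ Set.univ)
    (hηM : ∀ M, ∀ A : Set H, ηM M A = ρM M A / ρM M Set.univ) :
    ∀ ε > (0 : ℝ), ∃ M₀ : ℕ, ∀ M ≥ M₀, ∀ A : Set H, MeasurableSet A →
      |ηM M A - η A| ≤ ε := by
  have hΛ_meas : ∀ ω u, Measurable (Λ ω u) := fun ω u =>
    hmeas.comp (measurable_const.prodMk (measurable_const.prodMk measurable_id))
  have hθ_avg : ∀ M ω u x, θ M ω u x = ⨍ w in part M (cell M x), Λ ω u w ∂μK := by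
    intro M ω u x
    rw [hθ, setAverage_eq, smul_eq_mul, measureReal_def]
  have hθ_mem : ∀ M ω u x, θ M ω u x ∈ Icc lm lp := fun M ω u x =>
    hθ_avg M ω u x ▸ setAverage_mem_Icc (hΛ_meas ω u).aestronglyMeasurable
      (fun w => ⟨hlow ω u w, hhigh ω u w⟩) (hppos M _).ne'
  have hθ_lim : ∀ ω u x, Tendsto (fun M => θ M ω u x) atTop (𝓝 (Λ ω u x)) := fun ω u x => by
    have hshrink := tendsto_smallSets_nhds_of_tendsto_diam (fun M => hcell M x)
      (fun _ => Metric.isBounded_of_compactSpace)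
      (squeeze_zero (fun _ => Metric.diam_nonneg) (fun M => hdiam M _) hDlim)
    simp_rw [hθ_avg]
    exact ((hcont ω).comp (Continuous.prodMk_right u)).continuousAt.tendsto_setAverage
      (hΛ_meas ω u).stronglyMeasurable.stronglyMeasurableAtFilter hshrink fun M => (hppos M _).ne'
  have hθ_meas : ∀ M j, Measurable fun ω => θ M ω (s j) (y j) := fun M j => by
    simp_rw [hθ_avg]
    exact (hmeas.comp (measurable_fst.prodMk (measurable_const.prodMk measurable_snd))
      ).setAverage_prod_right' _
  have hΛ_obs_meas : ∀ j, Measurable fun ω => Λ ω (s j) (y j) := fun j =>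
    hmeas.comp (measurable_id.prodMk measurable_const : Measurable fun ω : X => (ω, s j, y j))
  have hI_meas : Measurable I := by
    simp_rw [funext hI]
    exact (hmeas.sub measurable_const).intervalIntegral_integral μK 0 t
  have hI_le : ∀ ω, |I ω| ≤ (lp + 1) * μK.real univ * |t - 0| := fun ω => by
    rw [hI, ← Real.norm_eq_abs]
    refine norm_intervalIntegral_integral_le μK (fun u x => ?_) 0 t
    rw [Real.norm_eq_abs, abs_le]
    constructor <;> linarith [hlow ω u x, hhigh ω u x]
  have hposterior := tendstoUniformly_setIntegral_exp_sum_log_sub_div_integral (μ := m) hlm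
    hθ_meas hΛ_obs_meas hI_meas (fun M ω j => hθ_mem M ω _ _)
    (fun ω j => ⟨hlow ω _ _, hhigh ω _ _⟩) hI_le fun ω j => hθ_lim ω _ _
  intro ε hε
  obtain ⟨M₀, hM₀⟩ := eventually_atTop.1 (Metric.tendstoUniformly_iff.1 hposterior ε hε)
  refine ⟨M₀, fun M hM A hA => ?_⟩
  simp only [hηM, hη, hρM, hρ, hz, hzM, integral_indicator_one_comp_mul hξ hA,
    integral_indicator_one_comp_mul hξ MeasurableSet.univ, preimage_univ, Measure.restrict_univ]
  rw [← Real.dist_eq, dist_comm]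
  exact (hM₀ M hM (ξ ⁻¹' A)).le

/-- Consistency of the normalized (Kushner–Stratonovich) posterior: as the mesh
of the spatial partitions tends to zero, the normalized discretized posteriors
converge to the exact normalized posterior in total variation (uniformly over
measurable sets). -/
theorem kushner_stratonovich_discretization_convergence
    {X : Type*} [MeasurableSpace X] (m : Measure X) [IsProbabilityMeasure m]
    {H : Type*} [MeasurableSpace H] (ξ : X → H) (hξ : Measurable ξ)
    {K : Type*} [MetricSpace K] [CompactSpace K]
    [MeasurableSpace K] [OpensMeasurableSpace K]
    (μK : Measure K) [IsFiniteMeasure μK]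
    (T t : ℝ) (hT : 0 < T) (ht : 0 < t) (htT : t ≤ T)
    (lm lp : ℝ) (hlm : 0 < lm) (hlmp : lm ≤ lp)
    (Λ : X → ℝ → K → ℝ)
    (hmeas : Measurable (fun p : X × ℝ × K => Λ p.1 p.2.1 p.2.2))
    (hlow : ∀ ω s x, lm ≤ Λ ω s x) (hhigh : ∀ ω s x, Λ ω s x ≤ lp)
    (hcont : ∀ ω, Continuous (fun p : ℝ × K => Λ ω p.1 p.2))
    (N : ℕ) (s : Fin N → ℝ) (y : Fin N → K)
    (hs : ∀ j, s j ∈ Set.Ioc (0 : ℝ) t)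
    (nM : ℕ → ℕ) (part : (M : ℕ) → Fin (nM M) → Set K)
    (hpmeas : ∀ M i, MeasurableSet (part M i))
    (hdisj : ∀ M, Pairwise (Function.onFun Disjoint (part M)))
    (hcover : ∀ M, (⋃ i, part M i) = Set.univ)
    (hppos : ∀ M i, 0 < μK (part M i))
    (D : ℕ → ℝ) (hD : ∀ M, 0 ≤ D M)
    (hdiam : ∀ M i, Metric.diam (part M i) ≤ D M)
    (hDlim : Tendsto D atTop (nhds 0))
    (cell : (M : ℕ) → K → Fin (nM M)) (hcell : ∀ M x, x ∈ part M (cell M x))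
    (θ : ℕ → X → ℝ → K → ℝ)
    (hθ : ∀ M ω u x, θ M ω u x =
      (μK (part M (cell M x))).toReal⁻¹ * ∫ w in part M (cell M x), Λ ω u w ∂μK)
    (I : X → ℝ)
    (hI : ∀ ω, I ω = ∫ u in (0 : ℝ)..t, ∫ x, (Λ ω u x - 1) ∂μK)
    (z : X → ℝ) (zM : ℕ → X → ℝ)
    (hz : ∀ ω, z ω = Real.exp ((∑ j, Real.log (Λ ω (s j) (y j))) - I ω))
    (hzM : ∀ M ω, zM M ω = Real.exp ((∑ j, Real.log (θ M ω (s j) (y j))) - I ω))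
    (ρ : Set H → ℝ) (ρM : ℕ → Set H → ℝ)
    (hρ : ∀ A : Set H, ρ A = ∫ ω, Set.indicator A (fun _ => (1 : ℝ)) (ξ ω) * z ω ∂m)
    (hρM : ∀ M, ∀ A : Set H,
      ρM M A = ∫ ω, Set.indicator A (fun _ => (1 : ℝ)) (ξ ω) * zM M ω ∂m)
    (η : Set H → ℝ) (ηM : ℕ → Set H → ℝ)
    (hη : ∀ A : Set H, η A = ρ A / ρ Set.univ)
    (hηM : ∀ M, ∀ A : Set H, ηM M A = ρM M A / ρM M Set.univ) :
    ∀ ε > (0 : ℝ), ∃ M₀ : ℕ, ∀ M ≥ M₀, ∀ A : Set H, MeasurableSet A →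
      |ηM M A - η A| ≤ ε :=
  kushner_stratonovich_discretization_convergence_general m ξ hξ μK t lm lp hlm Λ hmeas hlow hhigh
    hcont N s y nM part hppos D hdiam hDlim cell hcell θ hθ I hI z zM hz hzM ρ ρM hρ hρM η ηM hη hηM
end

section
/- Let (K, d) be a metric space with a finite Borel measure μ_K, T > 0, t ∈ (0, T], 0 < λ₋ ≤ λ₊. Let ℓ : [0, T] × K → ℝ be measurable with λ₋ ≤ ℓ ≤ λ₊ everywhere. Let (s_1, y_1), …, (s_N, y_N) ∈ (0, t] × K be observation points, let K = K_1 ⊎ … ⊎ K_M be a partition into measurable sets with μ_K(K_i) > 0, let θ(s, y) be the average of ℓ(s, ·) over the cell containing y (so λ₋ ≤ θ ≤ λ₊), and let I ⊆ {1, …, M} be a set of observed cell indices with complement I^c; write K(I) := ∪_{i ∈ I} K_i and K(I^c) := ∪_{i ∈ I^c} K_i. Define the full discretized likelihood z^M := exp( Σ_{j=1}^N log θ(s_j, y_j) − ∫_0^t ∫_K (ℓ − 1) dμ_K ds ) and the partial-observation likelihood z^M_I := exp( Σ_{j : y_j ∈ K(I)} log θ(s_j, y_j) − ∫_0^t ∫_{K(I)}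 (ℓ − 1) dμ_K ds ). Then |z^M − z^M_I| ≤ ϑ̄ · ( exp{ max(|log λ₋|, |log λ₊|) · N_{I^c} + t · μ_K(K(I^c)) · max(|λ₋ − 1|, |λ₊ − 1|) } − 1 ), where N_{I^c} := #{ j : y_j ∈ K(I^c) } is the number of observation points with marks in the unobserved region and ϑ̄ := max{ λ₊^N exp(−t(λ₋ − 1)μ_K(K)), λ₊^N, exp(−t(λ₋ − 1)μ_K(K)) }. -/
/-!
Splitting the sum over the observations and the integral over `K` along `K(I) ⊔ K(Iᶜ)` factors
`z^M = z^M_I · e^δ`, where `δ` collects the log-intensities of the `N_{Iᶜ}` points marked in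
`K(Iᶜ)` minus the integral of `ℓ - 1` over `[0, t] × K(Iᶜ)`. As a cell average of `ℓ`, `θ` lies
in `[λ₋, λ₊]`, which bounds `|δ|` by the exponent on the right. Finally
`|z^M - z^M_I| = z^M_I |e^δ - 1| ≤ z^M_I (e^{|δ|} - 1)`, and `z^M_I ≤ ϑ̄` because
`log z^M_I ≤ max(0, N log λ₊) + max(0, -t (λ₋ - 1) μ_K(K))`.
-/

open MeasureTheory Set

namespace Real

theorem abs_exp_sub_one_le_exp_abs_sub_one (x : ℝ) : |exp x - 1| ≤ exp |x| - 1 := by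
  rcases le_total 0 x with hx | hx
  · rw [abs_of_nonneg hx, abs_of_nonneg (sub_nonneg.2 (one_le_exp hx))]
  · rw [abs_of_nonpos hx, abs_of_nonpos (sub_nonpos.2 (exp_le_one_iff.2 hx))]
    -- `1 - e^x ≤ e^{-x} - 1` is AM-GM for `e^x` and `e^{-x}`, whose product is `1`.
    have hprod : exp x * exp (-x) = 1 := by rw [← exp_add, add_neg_cancel, exp_zero]
    nlinarith [exp_pos x, sq_nonneg (exp x - 1)]

theorem abs_exp_add_sub_exp_le {a δ C D : ℝ} (ha : exp a ≤ C) (hδ : |δ| ≤ D) :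
    |exp (a + δ) - exp a| ≤ C * (exp D - 1) := by
  rw [exp_add, ← mul_sub_one, abs_mul, abs_of_pos (exp_pos a)]
  exact mul_le_mul ha ((abs_exp_sub_one_le_exp_abs_sub_one δ).trans (by gcongr))
    (abs_nonneg _) ((exp_pos a).le.trans ha)

end Real

theorem mul_le_max_zero_mul {c x X : ℝ} (hx : 0 ≤ x) (hxX : x ≤ X) : c * x ≤ max 0 (c * X) := by
  rcases le_total 0 c with hc | hc
  · exact (mul_le_mul_of_nonneg_left hxX hc).trans (le_max_right _ _)
  · exact (mul_nonpos_of_nonpos_of_nonneg hc hx).trans (le_max_left _ _)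

theorem max_one_mul_max_one {A B : ℝ} (hA : 0 ≤ A) (hB : 0 ≤ B) (h : 1 ≤ max A B) :
    max 1 A * max 1 B = max (A * B) (max A B) := by
  rcases le_total 1 A with hA1 | hA1 <;> rcases le_total 1 B with hB1 | hB1
  · rw [max_eq_right hA1, max_eq_right hB1, max_eq_left]
    exact max_le (le_mul_of_one_le_right hA hB1) (le_mul_of_one_le_left hB hA1)
  · rw [max_eq_right hA1, max_eq_left hB1, mul_one, max_eq_left (hB1.trans hA1),
      max_eq_right (mul_le_of_le_one_right hA hB1)]
  · rw [max_eq_left hA1, max_eq_right hB1, one_mul, max_eq_right (hA1.trans hB1),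
      max_eq_right (mul_le_of_le_one_left hB hA1)]
  · have : max A B = 1 := le_antisymm (max_le hA1 hB1) h
    rw [max_eq_left hA1, max_eq_left hB1, one_mul, this, max_eq_right]
    exact (mul_le_of_le_one_left hB hA1).trans hB1

theorem Real.exp_le_max_mul_max {x a b : ℝ} (hx : x ≤ max 0 a + max 0 b)
    (h : 1 ≤ max (exp a) (exp b)) : exp x ≤ max (exp a * exp b) (max (exp a) (exp b)) := by
  rw [← max_one_mul_max_one (exp_pos a).le (exp_pos b).le h, ← exp_zero, ← exp_monotone.map_max,
    ← exp_monotone.map_max, ← exp_add]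
  exact exp_le_exp.2 hx

theorem exp_sub_le_max_pow_mul_exp {L J lm lp t m : ℝ} {N : ℕ} (hlm : 0 < lm) (hlmp : lm ≤ lp)
    (ht : 0 ≤ t) (hm : 0 ≤ m) (hL : L ≤ max 0 (Real.log lp * N))
    (hJ : -J ≤ max 0 (-(t * (lm - 1) * m))) :
    Real.exp (L - J) ≤
      max (lp ^ N * Real.exp (-(t * (lm - 1) * m)))
        (max (lp ^ N) (Real.exp (-(t * (lm - 1) * m)))) := by
  have hpow : Real.exp (Real.log lp * N) = lp ^ N := by
    rw [mul_comm, Real.exp_nat_mul, Real.exp_log (hlm.trans_le hlmp)]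
  have hone : 1 ≤ max (lp ^ N) (Real.exp (-(t * (lm - 1) * m))) := by
    rcases le_total 1 lp with h | h
    · exact (one_le_pow₀ h).trans (le_max_left _ _)
    · refine (Real.one_le_exp ?_).trans (le_max_right _ _)
      have := mul_nonneg (mul_nonneg ht (sub_nonneg.2 (hlmp.trans h))) hm
      linarith
  rw [← hpow] at hone ⊢
  exact Real.exp_le_max_mul_max (by linarith) hone

theorem Finset.sum_le_max_zero_mul_card {ι : Type*} [Fintype ι] (s : Finset ι) {f : ι → ℝ}
    {c : ℝ} (h : ∀ i ∈ s, f i ≤ c) : ∑ i ∈ s, f i ≤ max 0 (c * Fintype.card ι) := by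
  refine (sum_le_card_nsmul s f c h).trans ?_
  rw [nsmul_eq_mul, mul_comm]
  exact mul_le_max_zero_mul (Nat.cast_nonneg _) (by exact_mod_cast card_le_univ s)

theorem Finset.abs_sum_le_card_mul {ι : Type*} {s : Finset ι} {f : ι → ℝ} {C : ℝ}
    (h : ∀ i ∈ s, |f i| ≤ C) : |∑ i ∈ s, f i| ≤ s.card * C := by
  rw [← nsmul_eq_mul]
  exact (abs_sum_le_sum_abs f s).trans (sum_le_card_nsmul s _ C h)

section IteratedIntegral

variable {K : Type*} [MeasurableSpace K] {μ : Measure K} [IsFiniteMeasure μ] {f : ℝ → K → ℝ}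
  {C : ℝ}

theorem integrable_section_of_abs_le (hf : Measurable fun p : ℝ × K => f p.1 p.2)
    (hC : ∀ u x, |f u x| ≤ C) (u : ℝ) : Integrable (f u) μ :=
  Integrable.of_bound (hf.comp measurable_prodMk_left).aestronglyMeasurable C
    (ae_of_all _ fun x => hC u x)

theorem intervalIntegrable_setIntegral_of_abs_le (hf : Measurable fun p : ℝ × K => f p.1 p.2)
    (hC : ∀ u x, |f u x| ≤ C) (S : Set K) (a b : ℝ) :
    IntervalIntegrable (fun u => ∫ x in S, f u x ∂μ) volume a b := by
  rw [intervalIntegrable_iff, uIoc]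
  exact Integrable.integral_prod_left (f := fun p : ℝ × K => f p.1 p.2)
    (Integrable.of_bound hf.aestronglyMeasurable C (ae_of_all _ fun p => hC p.1 p.2))

theorem intervalIntegral_integral_eq_add_compl (hf : Measurable fun p : ℝ × K => f p.1 p.2)
    (hC : ∀ u x, |f u x| ≤ C) {S : Set K} (hS : MeasurableSet S) (a b : ℝ) :
    ∫ u in a..b, ∫ x, f u x ∂μ =
      (∫ u in a..b, ∫ x in S, f u x ∂μ) + ∫ u in a..b, ∫ x in Sᶜ, f u x ∂μ := by
  rw [← intervalIntegral.integral_add (intervalIntegrable_setIntegral_of_abs_le hf hC S a b)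
    (intervalIntegrable_setIntegral_of_abs_le hf hC Sᶜ a b)]
  exact intervalIntegral.integral_congr fun u _ =>
    (integral_add_compl hS (integrable_section_of_abs_le hf hC u)).symm

theorem abs_intervalIntegral_setIntegral_le (hC : ∀ u x, |f u x| ≤ C) (S : Set K) {t : ℝ}
    (ht : 0 ≤ t) : |∫ u in 0..t, ∫ x in S, f u x ∂μ| ≤ t * μ.real S * C := by
  have hinner : ∀ u, ‖∫ x in S, f u x ∂μ‖ ≤ C * μ.real S := fun u =>
    norm_setIntegral_le_of_norm_le_const (measure_lt_top μ S) fun x _ => hC u x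
  have := intervalIntegral.norm_integral_le_of_norm_le_const (a := 0) (b := t) fun u _ => hinner u
  rw [Real.norm_eq_abs, sub_zero, abs_of_nonneg ht] at this
  linarith

theorem mul_le_intervalIntegral_setIntegral (hf : Measurable fun p : ℝ × K => f p.1 p.2)
    (hC : ∀ u x, |f u x| ≤ C) {c : ℝ} (hc : ∀ u x, c ≤ f u x) {S : Set K}
    (hS : MeasurableSet S) {t : ℝ} (ht : 0 ≤ t) :
    t * c * μ.real S ≤ ∫ u in 0..t, ∫ x in S, f u x ∂μ := by
  have := intervalIntegral.integral_mono_on ht intervalIntegrable_const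
    (intervalIntegrable_setIntegral_of_abs_le hf hC S 0 t) fun u _ =>
      setIntegral_ge_of_const_le_real hS (measure_ne_top μ S) (fun x _ => hc u x)
        (integrable_section_of_abs_le hf hC u).integrableOn
  rwa [intervalIntegral.integral_const, smul_eq_mul, sub_zero, ← mul_assoc] at this

end IteratedIntegral

theorem setAverage_mem_Icc_s17 {K : Type*} [MeasurableSpace K] {μ : Measure K} [IsFiniteMeasure μ]
    {g : K → ℝ} {a b : ℝ} (hg : Integrable g μ) (hab : ∀ x, g x ∈ Icc a b) {S : Set K}
    (hS : μ S ≠ 0) : (μ S).toReal⁻¹ * ∫ x in S, g x ∂μ ∈ Icc a b := by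
  rw [← measureReal_def, ← smul_eq_mul, ← setAverage_eq]
  exact (convex_Icc a b).set_average_mem isClosed_Icc hS (measure_ne_top μ S)
    (ae_of_all _ hab) hg.integrableOn

theorem partial_observation_likelihood_error_general
    {K : Type*} [MeasurableSpace K]
    (μK : Measure K) [IsFiniteMeasure μK]
    (t : ℝ) (ht : 0 < t)
    (lm lp : ℝ) (hlm : 0 < lm) (hlmp : lm ≤ lp)
    (ℓ : ℝ → K → ℝ)
    (hmeas : Measurable (fun p : ℝ × K => ℓ p.1 p.2))
    (hlow : ∀ s x, lm ≤ ℓ s x) (hhigh : ∀ s x, ℓ s x ≤ lp)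
    (N : ℕ) (s : Fin N → ℝ) (y : Fin N → K)
    (M : ℕ) (part : Fin M → Set K)
    (hpmeas : ∀ i, MeasurableSet (part i))
    (hdisj : Pairwise (Function.onFun Disjoint part))
    (hcover : (⋃ i, part i) = Set.univ)
    (hppos : ∀ i, 0 < μK (part i))
    (cell : K → Fin M)
    (θ : ℝ → K → ℝ)
    (hθ : ∀ u x, θ u x =
      (μK (part (cell x))).toReal⁻¹ * ∫ w in part (cell x), ℓ u w ∂μK)
    (Iobs : Finset (Fin M)) (KI KIc : Set K)
    (hKI : KI = ⋃ i ∈ Iobs, part i)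
    (hKIc : KIc = ⋃ i ∈ Iobsᶜ, part i)
    (zM zMI : ℝ)
    (hzM : zM = Real.exp ((∑ j, Real.log (θ (s j) (y j))) -
      ∫ u in (0 : ℝ)..t, ∫ x, (ℓ u x - 1) ∂μK))
    (hzMI : zMI = Real.exp
      ((∑ j ∈ Finset.univ.filter (fun j => cell (y j) ∈ Iobs),
          Real.log (θ (s j) (y j))) -
        ∫ u in (0 : ℝ)..t, ∫ x in KI, (ℓ u x - 1) ∂μK)) :
    |zM - zMI| ≤
      (max (lp ^ N * Real.exp (-(t * (lm - 1) * (μK Set.univ).toReal)))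
        (max (lp ^ N) (Real.exp (-(t * (lm - 1) * (μK Set.univ).toReal))))) *
      (Real.exp (max |Real.log lm| |Real.log lp| *
          (Finset.univ.filter (fun j => cell (y j) ∉ Iobs)).card +
        t * (μK KIc).toReal * max |lm - 1| |lp - 1|) - 1) := by
  have hℓ : ∀ u x, |ℓ u x| ≤ max |lm| |lp| := fun u x => abs_le_max_abs_abs (hlow u x) (hhigh u x)
  have hℓ1 : ∀ u x, |ℓ u x - 1| ≤ max |lm - 1| |lp - 1| := fun u x =>
    abs_le_max_abs_abs (by linarith [hlow u x]) (by linarith [hhigh u x])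
  have hmeas1 : Measurable fun p : ℝ × K => ℓ p.1 p.2 - 1 := hmeas.sub_const 1
  have hθ_mem : ∀ u x, θ u x ∈ Icc lm lp := fun u x => hθ u x ▸
    setAverage_mem_Icc_s17 (integrable_section_of_abs_le hmeas hℓ u) (fun w => ⟨hlow u w, hhigh u w⟩)
      (hppos _).ne'
  have hKImeas : MeasurableSet KI :=
    hKI ▸ MeasurableSet.biUnion (to_countable _) fun i _ => hpmeas i
  have hKIc_eq : KIc = KIᶜ := by
    simpa [hKIc, hKI] using (biUnion_compl_eq_of_pairwise_disjoint_of_iUnion_eq_univ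
      hcover hdisj (Iobs : Set (Fin M))).symm
  set Lobs := ∑ j ∈ Finset.univ.filter (fun j => cell (y j) ∈ Iobs), Real.log (θ (s j) (y j))
  set Lun := ∑ j ∈ Finset.univ.filter (fun j => cell (y j) ∉ Iobs), Real.log (θ (s j) (y j))
  set Jobs := ∫ u in (0 : ℝ)..t, ∫ x in KI, (ℓ u x - 1) ∂μK
  set Jun := ∫ u in (0 : ℝ)..t, ∫ x in KIc, (ℓ u x - 1) ∂μK
  have hzM_eq : zM = Real.exp ((Lobs - Jobs) + (Lun - Jun)) := by
    rw [hzM, ← Finset.sum_filter_add_sum_filter_not Finset.univ (fun j => cell (y j) ∈ Iobs),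
      intervalIntegral_integral_eq_add_compl hmeas1 hℓ1 hKImeas, ← hKIc_eq]
    congr 1
    ring
  have hδ : |Lun - Jun| ≤ max |Real.log lm| |Real.log lp| *
      (Finset.univ.filter (fun j => cell (y j) ∉ Iobs)).card +
        t * (μK KIc).toReal * max |lm - 1| |lp - 1| := by
    have hlogθ : ∀ u x, |Real.log (θ u x)| ≤ max |Real.log lm| |Real.log lp| := fun u x =>
      abs_le_max_abs_abs (Real.log_le_log hlm (hθ_mem u x).1)
        (Real.log_le_log (hlm.trans_le (hθ_mem u x).1) (hθ_mem u x).2)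
    rw [mul_comm]
    exact (abs_sub _ _).trans (add_le_add (Finset.abs_sum_le_card_mul fun j _ => hlogθ _ _)
      (abs_intervalIntegral_setIntegral_le hℓ1 KIc ht.le))
  have hLobs : Lobs ≤ max 0 (Real.log lp * N) := by
    simpa only [Fintype.card_fin] using Finset.sum_le_max_zero_mul_card
      (Finset.univ.filter fun j => cell (y j) ∈ Iobs) fun j _ =>
      Real.log_le_log (hlm.trans_le (hθ_mem _ _).1) (hθ_mem _ _).2
  have hJobs : -Jobs ≤ max 0 (-(t * (lm - 1) * (μK univ).toReal)) := by
    have := mul_le_intervalIntegral_setIntegral (μ := μK) hmeas1 hℓ1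
      (fun u x => sub_le_sub_right (hlow u x) 1) hKImeas ht.le
    rw [← neg_mul]
    refine (neg_le.1 ?_).trans
      (mul_le_max_zero_mul measureReal_nonneg (measureReal_mono (subset_univ KI)))
    simpa only [neg_mul, neg_neg] using this
  rw [hzM_eq, hzMI]
  exact Real.abs_exp_add_sub_exp_le
    (exp_sub_le_max_pow_mul_exp hlm hlmp ht.le ENNReal.toReal_nonneg hLobs hJobs) hδ

/-- Bound on the difference between the full discretized likelihood `z^M` and the
partial-observation likelihood `z^M_I`, which uses only the observation points and
the integral contribution from the observed cells `K(I)`. -/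
theorem partial_observation_likelihood_error
    {K : Type*} [MetricSpace K] [MeasurableSpace K] [OpensMeasurableSpace K]
    (μK : Measure K) [IsFiniteMeasure μK]
    (T t : ℝ) (hT : 0 < T) (ht : 0 < t) (htT : t ≤ T)
    (lm lp : ℝ) (hlm : 0 < lm) (hlmp : lm ≤ lp)
    (ℓ : ℝ → K → ℝ)
    (hmeas : Measurable (fun p : ℝ × K => ℓ p.1 p.2))
    (hlow : ∀ s x, lm ≤ ℓ s x) (hhigh : ∀ s x, ℓ s x ≤ lp)
    (N : ℕ) (s : Fin N → ℝ) (y : Fin N → K)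
    (hs : ∀ j, s j ∈ Set.Ioc (0 : ℝ) t)
    (M : ℕ) (part : Fin M → Set K)
    (hpmeas : ∀ i, MeasurableSet (part i))
    (hdisj : Pairwise (Function.onFun Disjoint part))
    (hcover : (⋃ i, part i) = Set.univ)
    (hppos : ∀ i, 0 < μK (part i))
    (cell : K → Fin M) (hcell : ∀ x, x ∈ part (cell x))
    (θ : ℝ → K → ℝ)
    (hθ : ∀ u x, θ u x =
      (μK (part (cell x))).toReal⁻¹ * ∫ w in part (cell x), ℓ u w ∂μK)
    (Iobs : Finset (Fin M)) (KI KIc : Set K)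
    (hKI : KI = ⋃ i ∈ Iobs, part i)
    (hKIc : KIc = ⋃ i ∈ Iobsᶜ, part i)
    (zM zMI : ℝ)
    (hzM : zM = Real.exp ((∑ j, Real.log (θ (s j) (y j))) -
      ∫ u in (0 : ℝ)..t, ∫ x, (ℓ u x - 1) ∂μK))
    (hzMI : zMI = Real.exp
      ((∑ j ∈ Finset.univ.filter (fun j => cell (y j) ∈ Iobs),
          Real.log (θ (s j) (y j))) -
        ∫ u in (0 : ℝ)..t, ∫ x in KI, (ℓ u x - 1) ∂μK)) :
    |zM - zMI| ≤
      (max (lp ^ N * Real.exp (-(t * (lm - 1) * (μK Set.univ).toReal)))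
        (max (lp ^ N) (Real.exp (-(t * (lm - 1) * (μK Set.univ).toReal))))) *
      (Real.exp (max |Real.log lm| |Real.log lp| *
          (Finset.univ.filter (fun j => cell (y j) ∉ Iobs)).card +
        t * (μK KIc).toReal * max |lm - 1| |lp - 1|) - 1) :=
  partial_observation_likelihood_error_general μK t ht lm lp hlm hlmp ℓ hmeas hlow hhigh N s y M
    part hpmeas hdisj hcover hppos cell θ hθ Iobs KI KIc hKI hKIc zM zMI hzM hzMI
end
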